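/- arXiv:2603.09795 — 3 statements merged into one kernel-verified Lean document; each statement's English description precedes it below -/
import Mathlib

section
/- If a graph G contains an M-flower relative to some maximum matching M, then G is not a König–Egerváry graph. -/
open SimpleGraph

variable {V : Type*} [DecidableEq V]

/-- `M` is a matching of `G`: a set of edges of `G`, pairwise not sharing a vertex. -/
def IsMatching' (G : SimpleGraph V) (M : Finset (Sym2 V)) : Prop :=
  (↑M : Set (Sym2 V)) ⊆ G.edgeSet ∧
    ∀ e ∈ M, ∀ f ∈ M, e ≠ f → ∀ v : V, ¬(v ∈ e ∧ v ∈ f)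

/-- `M` is a maximum matching of `G`. -/
def IsMaxMatching (G : SimpleGraph V) (M : Finset (Sym2 V)) : Prop :=
  IsMatching' G M ∧ ∀ M' : Finset (Sym2 V), IsMatching' G M' → M'.card ≤ M.card

/-- The vertex `v` is matched (saturated) by `M`. -/
def MatchedBy (M : Finset (Sym2 V)) (v : V) : Prop :=
  ∃ e ∈ M, v ∈ e

/-- A walk is `M`-alternating: consecutive edges alternate between `M` and its complement. -/
def IsAltWalk {G : SimpleGraph V} (M : Finset (Sym2 V)) {u v : V} (w : G.Walk u v) : Prop :=
  w.edges.Chain' (fun e f => e ∈ M ↔ f ∉ M)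

/-- The first edge of the walk belongs to `M`. -/
def StartsMatched {G : SimpleGraph V} (M : Finset (Sym2 V)) {u v : V} (w : G.Walk u v) : Prop :=
  ∃ e, w.edges.head? = some e ∧ e ∈ M

/-- The last edge of the walk belongs to `M`. -/
def EndsMatched {G : SimpleGraph V} (M : Finset (Sym2 V)) {u v : V} (w : G.Walk u v) : Prop :=
  ∃ e, w.edges.getLast? = some e ∧ e ∈ M

/-- The first edge of the walk does not belong to `M`. -/
def StartsUnmatched {G : SimpleGraph V} (M : Finset (Sym2 V)) {u v : V} (w : G.Walk u v) : Prop :=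
  ∃ e, w.edges.head? = some e ∧ e ∉ M

/-- The last edge of the walk does not belong to `M`. -/
def EndsUnmatched {G : SimpleGraph V} (M : Finset (Sym2 V)) {u v : V} (w : G.Walk u v) : Prop :=
  ∃ e, w.edges.getLast? = some e ∧ e ∉ M

/-- An `M`-blossom with base `b`: an odd cycle of length `2k+1` containing exactly `k`
edges of `M`, alternating, whose base `b` is not matched within the cycle. -/
def IsBlossom (G : SimpleGraph V) (M : Finset (Sym2 V)) {b : V} (c : G.Walk b b) : Prop :=
  c.IsCycle ∧ Odd c.length ∧ IsAltWalk M c ∧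
    2 * (c.edges.toFinset ∩ M).card + 1 = c.length ∧
    ∀ e ∈ c.edges, e ∈ M → b ∉ e

/-- An `M`-flower: an `M`-blossom with base `b` together with an even `M`-alternating
stem from `b` to an `M`-unmatched vertex `u`, sharing only the base with the blossom. -/
def IsFlower (G : SimpleGraph V) (M : Finset (Sym2 V)) {b u : V}
    (c : G.Walk b b) (s : G.Walk b u) : Prop :=
  IsBlossom G M c ∧ s.IsPath ∧ Even s.length ∧ IsAltWalk M s ∧
    ¬ MatchedBy M u ∧ ∀ x ∈ s.support, x ∈ c.support → x = b

/-- An `M`-posy: two distinct `M`-blossoms joined by an odd `M`-alternating path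
between their bases, starting and ending with matched edges. -/
def IsPosy (G : SimpleGraph V) (M : Finset (Sym2 V)) {b₁ b₂ : V}
    (c₁ : G.Walk b₁ b₁) (c₂ : G.Walk b₂ b₂) (p : G.Walk b₁ b₂) : Prop :=
  IsBlossom G M c₁ ∧ IsBlossom G M c₂ ∧ (b₁ ≠ b₂ ∨ c₁.edges ≠ c₂.edges) ∧
    p.IsPath ∧ Odd p.length ∧ IsAltWalk M p ∧ StartsMatched M p ∧ EndsMatched M p

/-- An `M`-Tposy: a posy whose connecting path is internally disjoint from both blossoms. -/
def IsTposy (G : SimpleGraph V) (M : Finset (Sym2 V)) {b₁ b₂ : V}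
    (c₁ : G.Walk b₁ b₁) (c₂ : G.Walk b₂ b₂) (p : G.Walk b₁ b₂) : Prop :=
  IsPosy G M c₁ c₂ p ∧
    ∀ x ∈ p.support, x ≠ b₁ → x ≠ b₂ → x ∉ c₁.support ∧ x ∉ c₂.support

/-- An `M`-Jposy: two (not necessarily distinct) `M`-blossoms joined by an odd
`M`-alternating walk between their bases, starting and ending with matched edges. -/
def IsJposy (G : SimpleGraph V) (M : Finset (Sym2 V)) {b₁ b₂ : V}
    (c₁ : G.Walk b₁ b₁) (c₂ : G.Walk b₂ b₂) (w : G.Walk b₁ b₂) : Prop :=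
  IsBlossom G M c₁ ∧ IsBlossom G M c₂ ∧
    Odd w.length ∧ IsAltWalk M w ∧ StartsMatched M w ∧ EndsMatched M w

/-- An `M`-Jflower: an `M`-blossom together with an `M`-alternating walk from its base
to an `M`-unmatched vertex. -/
def IsJflower (G : SimpleGraph V) (M : Finset (Sym2 V)) {b u : V}
    (c : G.Walk b b) (w : G.Walk b u) : Prop :=
  IsBlossom G M c ∧ IsAltWalk M w ∧ ¬ MatchedBy M u

/-- The vertex `x` belongs to some `M`-flower. -/
def InFlower (G : SimpleGraph V) (M : Finset (Sym2 V)) (x : V) : Prop :=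
  ∃ (b u : V) (c : G.Walk b b) (s : G.Walk b u),
    IsFlower G M c s ∧ (x ∈ c.support ∨ x ∈ s.support)

/-- The vertex `x` belongs to some `M`-posy. -/
def InPosy (G : SimpleGraph V) (M : Finset (Sym2 V)) (x : V) : Prop :=
  ∃ (b₁ b₂ : V) (c₁ : G.Walk b₁ b₁) (c₂ : G.Walk b₂ b₂) (p : G.Walk b₁ b₂),
    IsPosy G M c₁ c₂ p ∧ (x ∈ c₁.support ∨ x ∈ c₂.support ∨ x ∈ p.support)

/-- The vertex `x` belongs to some `M`-Tposy. -/
def InTposy (G : SimpleGraph V) (M : Finset (Sym2 V)) (x : V) : Prop :=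
  ∃ (b₁ b₂ : V) (c₁ : G.Walk b₁ b₁) (c₂ : G.Walk b₂ b₂) (p : G.Walk b₁ b₂),
    IsTposy G M c₁ c₂ p ∧ (x ∈ c₁.support ∨ x ∈ c₂.support ∨ x ∈ p.support)

/-- The vertex `x` belongs to some `M`-Jposy. -/
def InJposy (G : SimpleGraph V) (M : Finset (Sym2 V)) (x : V) : Prop :=
  ∃ (b₁ b₂ : V) (c₁ : G.Walk b₁ b₁) (c₂ : G.Walk b₂ b₂) (w : G.Walk b₁ b₂),
    IsJposy G M c₁ c₂ w ∧ (x ∈ c₁.support ∨ x ∈ c₂.support ∨ x ∈ w.support)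

/-- The vertex `x` belongs to some `M`-Jflower. -/
def InJflower (G : SimpleGraph V) (M : Finset (Sym2 V)) (x : V) : Prop :=
  ∃ (b u : V) (c : G.Walk b b) (w : G.Walk b u),
    IsJflower G M c w ∧ (x ∈ c.support ∨ x ∈ w.support)

/-- The independence number of `G`. -/
noncomputable def indepNum (G : SimpleGraph V) : ℕ :=
  sSup {n | ∃ s : Finset V, (∀ u ∈ s, ∀ w ∈ s, ¬ G.Adj u w) ∧ s.card = n}

/-- The matching number of `G`. -/
noncomputable def matchNum (G : SimpleGraph V) : ℕ :=
  sSup {n | ∃ M : Finset (Sym2 V), IsMatching' G M ∧ M.card = n}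

/-- `G` is a König–Egerváry graph: `α(G) + μ(G) = |V(G)|`. -/
def IsKE (G : SimpleGraph V) [Fintype V] : Prop :=
  _root_.indepNum G + matchNum G = Fintype.card V


/-! A König–Egerváry graph has a vertex cover `C` with `|C| = μ(G)`, namely the complement of a
maximum independent set. Against a maximum matching `M` such a cover is tight: every vertex of
`C` is matched and every edge of `M` has exactly one end in `C`. Along an `M`-alternating walk
leaving a vertex outside `C` by an unmatched edge, membership in `C` therefore alternates with
each step. The even stem carries the unmatched vertex `u ∉ C` to the base `b ∉ C`, and the odd
blossom, which leaves `b` by an unmatched edge, returns to `b` with `b ∈ C`. -/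

section

variable {V : Type*} {G : SimpleGraph V} {M : Finset (Sym2 V)}

lemma isAltWalk_cons {a v z : V} (hadj : G.Adj a v) (w : G.Walk v z) :
    IsAltWalk M (Walk.cons hadj w) ↔
      (∀ e ∈ w.edges.head?, s(a, v) ∈ M ↔ e ∉ M) ∧ IsAltWalk M w :=
  List.isChain_cons

lemma IsAltWalk.reverse {a z : V} {w : G.Walk a z} (hw : IsAltWalk M w) :
    IsAltWalk M w.reverse := by
  rw [IsAltWalk, Walk.edges_reverse]
  exact List.isChain_reverse.2 (hw.imp fun e f h => by tauto)

lemma SimpleGraph.Walk.mem_of_mem_edges_head? {a z : V} {w : G.Walk a z} {e : Sym2 V}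
    (he : e ∈ w.edges.head?) : a ∈ e := by
  cases w with
  | nil => simp at he
  | cons =>
    rw [Walk.edges_cons, List.head?_cons, Option.mem_some_iff] at he
    exact he ▸ Sym2.mem_mk_left _ _

theorem IsAltWalk.mem_iff_mem_iff_even_length {C : Set V} (hC : G.IsVertexCover C)
    (hsep : ∀ ⦃x y : V⦄, s(x, y) ∈ M → x ∈ C → y ∉ C)
    {a z : V} {w : G.Walk a z} (hw : IsAltWalk M w)
    (hhead : ∀ e ∈ w.edges.head?, e ∈ M ↔ a ∈ C) :
    z ∈ C ↔ (a ∈ C ↔ Even w.length) := by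
  induction w with
  | nil => simp
  | @cons a v z hadj w ih =>
    obtain ⟨hnext, hw⟩ := (isAltWalk_cons hadj w).1 hw
    have hfirst : s(a, v) ∈ M ↔ a ∈ C := hhead _ (by simp)
    have hv : v ∈ C ↔ a ∉ C := by
      by_cases ha : a ∈ C
      · exact iff_of_false (hsep (hfirst.2 ha) ha) (not_not.2 ha)
      · exact iff_of_true ((hC hadj).resolve_left ha) ha
    rw [ih hw fun e he => by have := hnext e he; tauto, hv, Walk.length_cons, Nat.even_add_one]
    tauto

theorem IsAltWalk.mem_iff_odd_length {C : Set V} (hC : G.IsVertexCover C)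
    (hsep : ∀ ⦃x y : V⦄, s(x, y) ∈ M → x ∈ C → y ∉ C)
    {a z : V} {w : G.Walk a z} (hw : IsAltWalk M w) (ha : a ∉ C)
    (hhead : ∀ e ∈ w.edges.head?, e ∉ M) :
    z ∈ C ↔ Odd w.length := by
  rw [hw.mem_iff_mem_iff_even_length hC hsep fun e he => iff_of_false (hhead e he) ha,
    ← Nat.not_even_iff_odd]
  tauto

lemma IsMatching'.eq_of_mem_of_mem (hM : IsMatching' G M) {e f : Sym2 V} (he : e ∈ M)
    (hf : f ∈ M) {v : V} (hve : v ∈ e) (hvf : v ∈ f) : e = f :=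
  by_contra fun hne => hM.2 e he f hf hne v ⟨hve, hvf⟩

lemma IsMatching'.exists_mem_forall_mem_cover_eq (hM : IsMatching' G M) {C : Finset V}
    (hC : G.IsVertexCover ↑C) (hcard : C.card ≤ M.card) :
    ∀ v ∈ C, ∃ e ∈ M, v ∈ e ∧ ∀ w ∈ e, w ∈ C → w = v := by
  have hend : ∀ e ∈ M, ∃ v ∈ C, v ∈ e := by
    intro e he
    induction e using Sym2.ind with
    | _ x y =>
      rcases hC (G.mem_edgeSet.1 (hM.1 he)) with hx | hy
      · exact ⟨x, hx, Sym2.mem_mk_left x y⟩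
      · exact ⟨y, hy, Sym2.mem_mk_right x y⟩
  choose f hfC hfe using hend
  have hinj : ∀ e₁ e₂ h₁ h₂, f e₁ h₁ = f e₂ h₂ → e₁ = e₂ := fun e₁ e₂ h₁ h₂ heq =>
    hM.eq_of_mem_of_mem h₁ h₂ (hfe e₁ h₁) (heq ▸ hfe e₂ h₂)
  have hsurj := Finset.surj_on_of_inj_on_of_card_le f hfC hinj hcard
  intro v hv
  obtain ⟨e, he, rfl⟩ := hsurj v hv
  refine ⟨e, he, hfe e he, fun w hw hwC => ?_⟩
  obtain ⟨e', he', rfl⟩ := hsurj w hwC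
  obtain rfl := hM.eq_of_mem_of_mem he' he (hfe e' he') hw
  rfl

lemma IsMatching'.matchedBy_of_mem_cover (hM : IsMatching' G M) {C : Finset V}
    (hC : G.IsVertexCover ↑C) (hcard : C.card ≤ M.card) {v : V} (hv : v ∈ C) :
    MatchedBy M v := by
  obtain ⟨e, he, hve, -⟩ := hM.exists_mem_forall_mem_cover_eq hC hcard v hv
  exact ⟨e, he, hve⟩

lemma IsMatching'.notMem_cover_of_mem_cover (hM : IsMatching' G M) {C : Finset V}
    (hC : G.IsVertexCover ↑C) (hcard : C.card ≤ M.card) {x y : V} (hxy : s(x, y) ∈ M)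
    (hx : x ∈ C) : y ∉ C := by
  intro hy
  obtain ⟨e, he, hxe, huniq⟩ := hM.exists_mem_forall_mem_cover_eq hC hcard x hx
  obtain rfl := hM.eq_of_mem_of_mem he hxy hxe (Sym2.mem_mk_left x y)
  exact (G.mem_edgeSet.1 (hM.1 hxy)).ne (huniq y (Sym2.mem_mk_right x y) hy).symm

lemma matchNum_eq_card (hM : IsMaxMatching G M) : matchNum G = M.card :=
  IsGreatest.csSup_eq ⟨⟨M, hM.1, rfl⟩, by rintro _ ⟨M', hM', rfl⟩; exact hM.2 M' hM'⟩

lemma exists_isIndepSet_card_eq_indepNum [Fintype V] (G : SimpleGraph V) :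
    ∃ S : Finset V, G.IsIndepSet ↑S ∧ S.card = _root_.indepNum G := by
  obtain ⟨S, hS, hcard⟩ : _root_.indepNum G ∈
      {n | ∃ S : Finset V, (∀ u ∈ S, ∀ w ∈ S, ¬ G.Adj u w) ∧ S.card = n} :=
    Nat.sSup_mem ⟨0, ∅, by simp, rfl⟩
      ⟨Fintype.card V, by rintro _ ⟨S, -, rfl⟩; exact S.card_le_univ⟩
  exact ⟨S, fun u hu w hw _ => hS u hu w hw, hcard⟩

lemma IsKE.exists_isVertexCover_card_le [DecidableEq V] [Fintype V] (hKE : IsKE G)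
    (hM : IsMaxMatching G M) : ∃ C : Finset V, G.IsVertexCover ↑C ∧ C.card ≤ M.card := by
  obtain ⟨S, hS, hcard⟩ := exists_isIndepSet_card_eq_indepNum G
  refine ⟨Sᶜ, by rwa [Finset.coe_compl, isVertexCover_compl], ?_⟩
  have := matchNum_eq_card hM
  unfold IsKE at hKE
  rw [Finset.card_compl]
  omega

theorem not_isFlower_of_isVertexCover [DecidableEq V] {C : Set V} (hC : G.IsVertexCover C)
    (hmatched : ∀ v ∈ C, MatchedBy M v) (hsep : ∀ ⦃x y : V⦄, s(x, y) ∈ M → x ∈ C → y ∉ C)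
    {b u : V} (c : G.Walk b b) (s : G.Walk b u) : ¬ IsFlower G M c s := by
  rintro ⟨⟨-, hodd, hcalt, -, hbase⟩, -, heven, hsalt, hu, -⟩
  have huC : u ∉ C := fun h => hu (hmatched u h)
  have hbC : b ∉ C := by
    have := hsalt.reverse.mem_iff_odd_length hC hsep huC fun e he hem =>
      hu ⟨e, hem, Walk.mem_of_mem_edges_head? he⟩
    simpa [← Nat.not_even_iff_odd, heven] using this
  refine hbC ((hcalt.mem_iff_odd_length hC hsep hbC fun e he hem => ?_).2 hodd)
  exact hbase e (List.mem_of_mem_head? he) hem (Walk.mem_of_mem_edges_head? he)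

end

/-- If `G` contains an `M`-flower relative to some maximum matching `M`,
then `G` is not a König–Egerváry graph. -/
theorem stmt_1 {V : Type*} [DecidableEq V] [Fintype V] (G : SimpleGraph V)
    (M : Finset (Sym2 V)) (hM : IsMaxMatching G M)
    (h : ∃ (b u : V) (c : G.Walk b b) (s : G.Walk b u), IsFlower G M c s) :
    ¬ IsKE G := by
  intro hKE
  obtain ⟨b, u, c, s, hflower⟩ := h
  obtain ⟨C, hC, hcard⟩ := hKE.exists_isVertexCover_card_le hM
  exact not_isFlower_of_isVertexCover hC (fun v => hM.1.matchedBy_of_mem_cover hC hcard)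
    (fun x y => hM.1.notMem_cover_of_mem_cover hC hcard) c s hflower
end

section
/- Let G be a graph, M a matching, and W an M-alternating walk from u to v that starts and ends with edges not in M. Then either there exists an M-alternating path from u to v starting and ending with edges not in M, or there exists an M-alternating walk from u to v (starting and ending with unmatched edges) whose first self-intersection forms an M-blossom. -/
open SimpleGraph

variable {V : Type*} [DecidableEq V]

/-! Cut `w` at its first repeated vertex `x`: `w = p ++ c ++ q`, where `p` is a path meeting the
closed walk `c` only at `x`. Numbering the edges of an `nn`-alternating walk from `0`, edge `i`
is matched iff `i` is odd. If `c` has even length, deleting it keeps this description, and we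
recurse on the shorter walk `p ++ q`. If `c` has odd length it is a cycle whose two edges at `x`
have the same status; they are distinct and share `x`, so they cannot both be matched, and `c` is
an `M`-blossom with base `x`. -/

section Alternation

variable {α : Type*}

def AlternatesFrom (M : Finset α) (k : ℕ) (l : List α) : Prop :=
  ∀ i (hi : i < l.length), l[i] ∈ M ↔ Odd (k + i)

variable {M : Finset α} {k : ℕ}

theorem alternatesFrom_append {l₁ l₂ : List α} :
    AlternatesFrom M k (l₁ ++ l₂) ↔
      AlternatesFrom M k l₁ ∧ AlternatesFrom M (k + l₁.length) l₂ := by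
  refine ⟨fun h => ⟨fun i hi => ?_, fun i hi => ?_⟩, fun ⟨h₁, h₂⟩ i hi => ?_⟩
  · rw [← List.getElem_append_left hi]
    exact h i (by simp; omega)
  · have := h (l₁.length + i) (by simp; omega)
    simpa [List.getElem_append_right, Nat.add_assoc] using this
  · rcases lt_or_ge i l₁.length with hi₁ | hi₁
    · rw [List.getElem_append_left hi₁]
      exact h₁ i hi₁
    · rw [List.getElem_append_right hi₁, h₂, Nat.add_assoc, Nat.add_sub_cancel' hi₁]

theorem alternatesFrom_add_of_even {m : ℕ} {l : List α} (hm : Even m) :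
    AlternatesFrom M (k + m) l ↔ AlternatesFrom M k l := by
  refine forall₂_congr fun i _ => iff_congr Iff.rfl ?_
  rw [add_right_comm, Nat.odd_add]
  simp [hm]

theorem AlternatesFrom.isChain {l : List α} (h : AlternatesFrom M k l) :
    l.IsChain (fun e f => e ∈ M ↔ f ∉ M) :=
  List.isChain_iff_getElem.2 fun i hi => by
    rw [h i (by omega), h (i + 1) hi, ← Nat.add_assoc, Nat.odd_add_one]
    tauto

theorem isChain_and_head_and_getLast_notMem_iff {l : List α} :
    l.IsChain (fun e f => e ∈ M ↔ f ∉ M) ∧ (∃ e, l.head? = some e ∧ e ∉ M) ∧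
        (∃ e, l.getLast? = some e ∧ e ∉ M) ↔
      Odd l.length ∧ AlternatesFrom M 0 l := by
  simp only [List.head?_eq_getElem?, List.getLast?_eq_getElem?, List.getElem?_eq_some_iff]
  constructor
  · rintro ⟨hch, ⟨a, ⟨h0, rfl⟩, ha⟩, ⟨b, ⟨hb, rfl⟩, hbM⟩⟩
    have halt : AlternatesFrom M 0 l := by
      intro i hi
      induction i with
      | zero => simpa using ha
      | succ i ih =>
        rw [← Nat.add_assoc, Nat.odd_add_one, ← ih (by omega)]
        have := hch.getElem i hi
        tauto
    refine ⟨?_, halt⟩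
    have := (halt _ hb).not.1 hbM
    rw [Nat.not_odd_iff_even, Nat.even_iff] at this
    rw [Nat.odd_iff]
    omega
  · rintro ⟨hodd, halt⟩
    have hpos : 0 < l.length := hodd.pos
    refine ⟨halt.isChain, ⟨_, ⟨hpos, rfl⟩, by simpa using halt 0 hpos⟩,
      ⟨_, ⟨by omega, rfl⟩, ?_⟩⟩
    rw [halt, Nat.not_odd_iff_even, Nat.even_iff]
    rw [Nat.odd_iff] at hodd
    omega

theorem AlternatesFrom.countP_mem [DecidableEq α] : ∀ {l : List α}, AlternatesFrom M 0 l →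
    l.countP (· ∈ M) = l.length / 2
  | [], _ => by simp
  | [a], h => by simpa using h 0
  | a :: b :: t, h => by
    have ha := h 0 (by simp)
    have hb := h 1 (by simp)
    have ht : AlternatesFrom M 0 t :=
      (alternatesFrom_add_of_even (k := 0) even_two).1
        (alternatesFrom_append (l₁ := [a, b]).1 h).2
    simp only [List.getElem_cons_zero, List.getElem_cons_succ] at ha hb
    simp [ht.countP_mem, ha, hb]
    omega

end Alternation

namespace SimpleGraph.Walk

variable {V : Type*} {G : SimpleGraph V} {u v x z : V}

theorem exists_eq_append_concat_append_of_not_isPath [DecidableEq V] (w : G.Walk u v)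
    (hw : ¬w.IsPath) :
    ∃ (x z : V) (p : G.Walk u x) (d : G.Walk x z) (h : G.Adj z x) (q : G.Walk x v),
      w = p.append ((d.concat h).append q) ∧ (p.append d).IsPath := by
  induction w using concatRec with
  | Hnil => exact absurd IsPath.nil hw
  | @Hconcat u y v w h ih =>
    by_cases hwp : w.IsPath
    · have hv : v ∈ w.support := by
        by_contra hv
        exact hw (hwp.concat hv h)
      refine ⟨v, y, w.takeUntil v hv, w.dropUntil v hv, h, nil, ?_, by rwa [take_spec]⟩
      rw [append_nil, append_concat, take_spec]
    · obtain ⟨x, z, p, d, h', q, rfl, hpd⟩ := ih hwp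
      exact ⟨x, z, p, d, h', q.concat h, by simp only [append_concat], hpd⟩

theorem IsPath.isCycle_concat {d : G.Walk x z} (hd : d.IsPath) (h : G.Adj z x)
    (hlen : d.length ≠ 1) : (d.concat h).IsCycle := by
  have hnil : d.length ≠ 0 := fun h0 => by
    cases eq_of_length_eq_zero h0
    exact h.ne rfl
  rw [concat_eq_append]
  refine hd.isCycle_append (IsPath.of_adj h) ?_ (Or.inl (by omega))
  have hnd := hd.support_nodup
  rw [← cons_tail_support, List.nodup_cons] at hnd
  simpa using hnd.1

theorem IsCycle.eq_zero_or_add_one_eq_length {c : G.Walk x x} (hc : c.IsCycle) {i : ℕ}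
    (hi : i < c.edges.length) (hx : x ∈ c.edges[i]) : i = 0 ∨ i + 1 = c.length := by
  rw [length_edges] at hi
  rw [getElem_edges, Sym2.mem_iff] at hx
  rcases hx with hx | hx
  · have := (hc.getVert_endpoint_iff hi.le).1 hx.symm
    omega
  · have := (hc.getVert_endpoint_iff hi).1 hx.symm
    omega

end SimpleGraph.Walk

section Matching

variable {V : Type*} {G : SimpleGraph V} {M : Finset (Sym2 V)} {u v x : V}

theorem isAltWalk_and_startsUnmatched_and_endsUnmatched_iff {w : G.Walk u v} :
    IsAltWalk M w ∧ StartsUnmatched M w ∧ EndsUnmatched M w ↔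
      Odd w.length ∧ AlternatesFrom M 0 w.edges := by
  rw [← w.length_edges]
  exact isChain_and_head_and_getLast_notMem_iff

theorem alternatesFrom_edges_append_of_even {p : G.Walk u x} {c : G.Walk x x} {q : G.Walk x v}
    (hw : Odd (p.append (c.append q)).length ∧ AlternatesFrom M 0 (p.append (c.append q)).edges)
    (hc : Even c.length) :
    Odd (p.append q).length ∧ AlternatesFrom M 0 (p.append q).edges := by
  simp only [Walk.length_append, Walk.edges_append, alternatesFrom_append,
    Walk.length_edges] at hw ⊢
  obtain ⟨hodd, hp, -, hq⟩ := hw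
  refine ⟨?_, hp, (alternatesFrom_add_of_even hc).1 hq⟩
  rw [Nat.odd_iff] at hodd ⊢
  rw [Nat.even_iff] at hc
  omega

theorem SimpleGraph.Walk.IsCycle.isBlossom_of_alternatesFrom [DecidableEq V]
    (hM : IsMatching' G M) {c : G.Walk x x} (hc : c.IsCycle) (hodd : Odd c.length) {k : ℕ}
    (halt : AlternatesFrom M k c.edges) :
    IsBlossom G M c := by
  have hlen := hc.three_le_length
  have hnodup := hc.isTrail.edges_nodup
  have hx_first : x ∈ c.edges[0]'(by simp; omega) := by simp [Walk.getElem_edges]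
  have hx_last : x ∈ c.edges[c.length - 1]'(by simp; omega) := by
    simp [Walk.getElem_edges, Nat.sub_add_cancel (by omega : 1 ≤ c.length)]
  have hk : Even k := by
    by_contra hk
    rw [Nat.not_even_iff_odd] at hk
    have h₀ := (halt 0 (by simp; omega)).2 (by simpa using hk)
    have h₁ := (halt (c.length - 1) (by simp; omega)).2 (by
      rw [Nat.odd_iff] at hk hodd ⊢
      omega)
    refine hM.2 _ h₀ _ h₁ ?_ x ⟨hx_first, hx_last⟩
    rw [Ne, hnodup.getElem_inj_iff]
    omega
  have halt₀ : AlternatesFrom M 0 c.edges :=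
    (alternatesFrom_add_of_even hk).1 (by simpa using halt)
  refine ⟨hc, hodd, halt₀.isChain, ?_, ?_⟩
  · have hcard : (c.edges.toFinset ∩ M).card = c.edges.countP (· ∈ M) := by
      rw [List.countP_eq_length_filter, ← List.toFinset_card_of_nodup (hnodup.filter _),
        List.toFinset_filter, ← Finset.filter_mem_eq_inter]
      simp
    rw [hcard, halt₀.countP_mem, Walk.length_edges]
    rw [Nat.odd_iff] at hodd
    omega
  · intro e he heM hxe
    obtain ⟨i, hi, rfl⟩ := List.getElem_of_mem he
    have := (halt₀ i hi).1 heM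
    rw [Nat.odd_iff] at this hodd
    rcases hc.eq_zero_or_add_one_eq_length hi hxe with rfl | hi' <;> omega

end Matching

/-- From an `nn`-alternating walk one extracts either an `nn`-alternating
path, or an `nn`-alternating walk whose first self-intersection forms an `M`-blossom. -/
theorem stmt_5 {V : Type*} [DecidableEq V] (G : SimpleGraph V) (M : Finset (Sym2 V))
    (hM : IsMatching' G M) (u v : V) (w : G.Walk u v)
    (halt : IsAltWalk M w) (hs : StartsUnmatched M w) (he : EndsUnmatched M w) :
    (∃ p : G.Walk u v, p.IsPath ∧ IsAltWalk M p ∧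
        StartsUnmatched M p ∧ EndsUnmatched M p) ∨
    (∃ (w' : G.Walk u v), IsAltWalk M w' ∧ StartsUnmatched M w' ∧ EndsUnmatched M w' ∧
      ∃ (x : V) (p : G.Walk u x) (c : G.Walk x x) (q : G.Walk x v),
        w' = p.append (c.append q) ∧ p.IsPath ∧ IsBlossom G M c ∧
        ∀ y ∈ p.support, y ∈ c.support → y = x) := by
  induction hn : w.length using Nat.strong_induction_on generalizing w with
  | _ n ih =>
  by_cases hpath : w.IsPath
  · exact Or.inl ⟨w, hpath, halt, hs, he⟩
  obtain ⟨x, z, p, d, h, q, rfl, hpd⟩ := w.exists_eq_append_concat_append_of_not_isPath hpath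
  have hnn := isAltWalk_and_startsUnmatched_and_endsUnmatched_iff.1 ⟨halt, hs, he⟩
  rcases Nat.even_or_odd (d.concat h).length with heven | hodd
  · obtain ⟨halt', hs', he'⟩ := isAltWalk_and_startsUnmatched_and_endsUnmatched_iff.2
      (alternatesFrom_edges_append_of_even hnn heven)
    refine ih _ ?_ (p.append q) halt' hs' he' rfl
    simp only [← hn, Walk.length_append, Walk.length_concat]
    omega
  · refine Or.inr ⟨_, halt, hs, he, x, p, d.concat h, q, rfl, hpd.of_append_left, ?_, ?_⟩
    · have hcyc := hpd.of_append_right.isCycle_concat h fun h1 => by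
        rw [Walk.length_concat, h1] at hodd
        exact Nat.not_odd_iff_even.2 even_two hodd
      have hc := hnn.2
      rw [Walk.edges_append, Walk.edges_append, alternatesFrom_append, alternatesFrom_append] at hc
      exact hcyc.isBlossom_of_alternatesFrom hM hodd hc.2.1
    · intro y hy hyc
      rw [Walk.support_concat, List.mem_append, List.mem_singleton] at hyc
      by_contra hyx
      exact hyc.elim (hpd.ne_of_mem_support_of_append hyx hy · rfl) hyx
end

section
/- Let G be a graph, M a maximum matching, and H an M-Jposy of G. Then for any two vertices u, v of H there exists both an M-alternating walk from u to v starting and ending with matched edges, and an M-alternating walk from u to v starting and ending with unmatched edges. -/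
open SimpleGraph

variable {V : Type*} [DecidableEq V]

/-! In a Jposy the closed walk `D = w c₂ w⁻¹` at `b₁` starts and ends with matched edges,
while `c₁` starts and ends with unmatched ones. The closed walk `c₁ D c₁` then starts and ends
unmatched and visits every vertex of the Jposy; cutting it at a vertex `x` and reading one of the
two pieces backwards gives walks `b₁ → x` starting unmatched and ending either way. Joining such
walks to `u` and to `v` through `D` yields the required `mm`- and `nn`-alternating walks. -/

section IsAltList

variable {α : Type*} {P : α → Prop} {l l₁ l₂ : List α} {s t : Bool}

/-- `s` and `t` record whether the first and the last element satisfy `P`. The empty list has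
type `(s, !s)` for every `s`, which makes it a unit for `IsAltList.append`. -/
def IsAltList (P : α → Prop) (l : List α) (s t : Bool) : Prop :=
  l.IsChain (fun e f => P e ↔ ¬ P f) ∧ (∀ e ∈ l.head?, P e ↔ s) ∧
    (∀ e ∈ l.getLast?, P e ↔ t) ∧ (l = [] → t = !s)

theorem isAltList_iff_of_ne_nil (hl : l ≠ []) :
    IsAltList P l s t ↔ l.IsChain (fun e f => P e ↔ ¬ P f) ∧
      (∃ e, l.head? = some e ∧ (P e ↔ s)) ∧
        (∃ e, l.getLast? = some e ∧ (P e ↔ t)) := by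
  obtain ⟨e, he⟩ := Option.ne_none_iff_exists'.1 (List.head?_eq_none_iff.not.2 hl)
  obtain ⟨f, hf⟩ := Option.ne_none_iff_exists'.1 (List.getLast?_eq_none_iff.not.2 hl)
  simp [IsAltList, he, hf, hl]

theorem IsAltList.reverse (h : IsAltList P l s t) : IsAltList P l.reverse t s := by
  obtain ⟨hc, hs, ht, hnil⟩ := h
  refine ⟨List.isChain_reverse.2 (hc.imp fun _ _ h => by tauto), by simpa using ht,
    by simpa using hs, fun h => ?_⟩
  simp [hnil (List.reverse_eq_nil_iff.1 h)]

theorem IsAltList.append {a : Bool} (h₁ : IsAltList P l₁ s a) (h₂ : IsAltList P l₂ (!a) t) :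
    IsAltList P (l₁ ++ l₂) s t := by
  rcases eq_or_ne l₁ [] with rfl | hne₁
  · obtain rfl := h₁.2.2.2 rfl
    simpa using h₂
  rcases eq_or_ne l₂ [] with rfl | hne₂
  · obtain rfl : t = a := by simpa using h₂.2.2.2 rfl
    simpa using h₁
  rw [isAltList_iff_of_ne_nil hne₁] at h₁
  rw [isAltList_iff_of_ne_nil hne₂] at h₂
  obtain ⟨hc₁, ⟨e, he, hes⟩, ⟨f, hf, hfa⟩⟩ := h₁
  obtain ⟨hc₂, ⟨g, hg, hga⟩, ⟨k, hk, hkt⟩⟩ := h₂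
  rw [isAltList_iff_of_ne_nil (by simp [hne₁])]
  refine ⟨List.isChain_append.2 ⟨hc₁, hc₂, ?_⟩, ⟨e, by simp [he], hes⟩,
    ⟨k, by simp [hk], hkt⟩⟩
  simp only [hf, hg, Option.mem_def, Option.some.injEq]
  rintro _ rfl _ rfl
  cases a <;> simp_all

theorem IsAltList.of_append (h : IsAltList P (l₁ ++ l₂) s t) :
    ∃ a, IsAltList P l₁ s a ∧ IsAltList P l₂ (!a) t := by
  classical
  rcases eq_or_ne l₁ [] with rfl | hne₁
  · exact ⟨!s, ⟨by simp, by simp, by simp, fun _ => rfl⟩, by simpa using h⟩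
  rcases eq_or_ne l₂ [] with rfl | hne₂
  · exact ⟨t, by simpa using h, ⟨by simp, by simp, by simp, fun _ => by simp⟩⟩
  obtain ⟨hc, hs, ht, -⟩ := h
  obtain ⟨hc₁, hc₂, hjunc⟩ := List.isChain_append.1 hc
  obtain ⟨f, hf⟩ := Option.ne_none_iff_exists'.1 (List.getLast?_eq_none_iff.not.2 hne₁)
  obtain ⟨g, hg⟩ := Option.ne_none_iff_exists'.1 (List.head?_eq_none_iff.not.2 hne₂)
  have hfg : P f ↔ ¬ P g := hjunc f (by simp [hf]) g (by simp [hg])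
  refine ⟨decide (P f), ⟨hc₁, ?_, by simp [hf], by simp [hne₁]⟩,
    ⟨hc₂, ?_, ?_, by simp [hne₂]⟩⟩
  · simpa [List.head?_append, hne₁] using hs
  · simp [hg, hfg]
  · simpa [List.getLast?_append, hne₂] using ht

end IsAltList

namespace SimpleGraph.Walk

variable {G : SimpleGraph V} {P : Sym2 V → Prop}

theorem exists_isAltList_of_mem_support {b x : V} {c : G.Walk b b} {s : Bool}
    (hc : IsAltList P c.edges s s) (hx : x ∈ c.support) (a : Bool) :
    ∃ p : G.Walk b x, IsAltList P p.edges s a := by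
  rw [← c.take_spec hx, edges_append] at hc
  obtain ⟨a', htake, hdrop⟩ := hc.of_append
  by_cases ha : a = a'
  · exact ⟨_, ha ▸ htake⟩
  · obtain rfl : a = !a' := by cases a <;> cases a' <;> simp_all
    exact ⟨(c.dropUntil x hx).reverse, by rw [edges_reverse]; exact hdrop.reverse⟩

end SimpleGraph.Walk

section Matching

variable {G : SimpleGraph V} {M : Finset (Sym2 V)}

omit [DecidableEq V] in
theorem isAltList_true_true_iff {u v : V} {w : G.Walk u v} :
    IsAltList (· ∈ M) w.edges true true ∧ ¬ w.Nil ↔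
      IsAltWalk M w ∧ StartsMatched M w ∧ EndsMatched M w := by
  rw [← Walk.edges_eq_nil]
  by_cases hne : w.edges = []
  · simp [hne, StartsMatched]
  · simp only [isAltList_iff_of_ne_nil hne, hne, not_false_eq_true, and_true, iff_true]
    rfl

omit [DecidableEq V] in
theorem isAltList_false_false_iff {u v : V} {w : G.Walk u v} :
    IsAltList (· ∈ M) w.edges false false ∧ ¬ w.Nil ↔
      IsAltWalk M w ∧ StartsUnmatched M w ∧ EndsUnmatched M w := by
  rw [← Walk.edges_eq_nil]
  by_cases hne : w.edges = []
  · simp [hne, StartsUnmatched]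
  · simp only [isAltList_iff_of_ne_nil hne, hne, not_false_eq_true, and_true,
      Bool.false_eq_true, iff_false]
    rfl

theorem IsBlossom.isAltList {b : V} {c : G.Walk b b} (hc : IsBlossom G M c) :
    IsAltList (· ∈ M) c.edges false false := by
  obtain ⟨-, hodd, halt, -, hbase⟩ := hc
  have hnil : ¬ c.Nil := Walk.not_nil_iff_lt_length.2 hodd.pos
  have hne : c.edges ≠ [] := Walk.edges_eq_nil.not.2 hnil
  have hhead : c.edges.head? = some s(b, c.snd) := by
    rw [List.head?_eq_some_head hne, Walk.head_edges_eq_mk_start_snd]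
  have hlast : c.edges.getLast? = some s(c.penultimate, b) := by
    rw [List.getLast?_eq_some_getLast hne, Walk.getLast_edges_eq_mk_penultimate_end]
  refine ⟨halt, ?_, ?_, fun h => absurd h hne⟩
  · simpa [hhead] using
      fun h => hbase _ (c.mk_start_snd_mem_edges hnil) h (Sym2.mem_mk_left _ _)
  · simpa [hlast] using
      fun h => hbase _ (c.mk_penultimate_end_mem_edges hnil) h (Sym2.mem_mk_right _ _)

theorem IsJposy.exists_isAltList {b₁ b₂ u v : V} {c₁ : G.Walk b₁ b₁} {c₂ : G.Walk b₂ b₂}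
    {w : G.Walk b₁ b₂} (hJ : IsJposy G M c₁ c₂ w)
    (hu : u ∈ c₁.support ∨ u ∈ c₂.support ∨ u ∈ w.support)
    (hv : v ∈ c₁.support ∨ v ∈ c₂.support ∨ v ∈ w.support) (t : Bool) :
    ∃ q : G.Walk u v, IsAltList (· ∈ M) q.edges t t ∧ ¬ q.Nil := by
  obtain ⟨hc₁, hc₂, hodd, halt, hstart, hend⟩ := hJ
  obtain ⟨hw, -⟩ := isAltList_true_true_iff.2 ⟨halt, hstart, hend⟩
  set D := w.append (c₂.append w.reverse)
  have hD : IsAltList (· ∈ M) D.edges true true := by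
    simpa only [D, Walk.edges_append, Walk.edges_reverse] using
      hw.append (hc₂.isAltList.append hw.reverse)
  have hK : IsAltList (· ∈ M) (c₁.append (D.append c₁)).edges false false := by
    simpa only [Walk.edges_append] using hc₁.isAltList.append (hD.append hc₁.isAltList)
  have hmem : ∀ x, (x ∈ c₁.support ∨ x ∈ c₂.support ∨ x ∈ w.support) →
      x ∈ (c₁.append (D.append c₁)).support := by
    simp only [D, Walk.mem_support_append_iff, Walk.support_reverse, List.mem_reverse]
    tauto
  obtain ⟨pu, hpu⟩ := Walk.exists_isAltList_of_mem_support hK (hmem u hu) t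
  obtain ⟨pv, hpv⟩ := Walk.exists_isAltList_of_mem_support hK (hmem v hv) t
  refine ⟨pu.reverse.append (D.append pv), ?_, ?_⟩
  · simpa only [Walk.edges_append, Walk.edges_reverse] using
      hpu.reverse.append (hD.append hpv)
  · rw [Walk.not_nil_iff_lt_length, Walk.length_append, Walk.length_append, Walk.length_append]
    have := hodd.pos
    omega

end Matching

theorem stmt_12_general {V : Type*} [DecidableEq V] (G : SimpleGraph V) (M : Finset (Sym2 V))
    {b₁ b₂ : V}
    (c₁ : G.Walk b₁ b₁) (c₂ : G.Walk b₂ b₂) (w : G.Walk b₁ b₂)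
    (hJ : IsJposy G M c₁ c₂ w) (u v : V)
    (hu : u ∈ c₁.support ∨ u ∈ c₂.support ∨ u ∈ w.support)
    (hv : v ∈ c₁.support ∨ v ∈ c₂.support ∨ v ∈ w.support) :
    (∃ q : G.Walk u v, IsAltWalk M q ∧ StartsMatched M q ∧ EndsMatched M q) ∧
    (∃ q : G.Walk u v, IsAltWalk M q ∧ StartsUnmatched M q ∧ EndsUnmatched M q) := by
  obtain ⟨q, hq⟩ := hJ.exists_isAltList hu hv true
  obtain ⟨q', hq'⟩ := hJ.exists_isAltList hu hv false
  exact ⟨⟨q, isAltList_true_true_iff.1 hq⟩, ⟨q', isAltList_false_false_iff.1 hq'⟩⟩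

/-- In an `M`-Jposy, any two vertices are joined by an `mm`-alternating
walk and by an `nn`-alternating walk. -/
theorem stmt_12 {V : Type*} [DecidableEq V] (G : SimpleGraph V) (M : Finset (Sym2 V))
    (hM : IsMaxMatching G M) {b₁ b₂ : V}
    (c₁ : G.Walk b₁ b₁) (c₂ : G.Walk b₂ b₂) (w : G.Walk b₁ b₂)
    (hJ : IsJposy G M c₁ c₂ w) (u v : V)
    (hu : u ∈ c₁.support ∨ u ∈ c₂.support ∨ u ∈ w.support)
    (hv : v ∈ c₁.support ∨ v ∈ c₂.support ∨ v ∈ w.support) :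
    (∃ q : G.Walk u v, IsAltWalk M q ∧ StartsMatched M q ∧ EndsMatched M q) ∧
    (∃ q : G.Walk u v, IsAltWalk M q ∧ StartsUnmatched M q ∧ EndsUnmatched M q) :=
  stmt_12_general G M c₁ c₂ w hJ u v hu hv
end
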